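/- arXiv:1802.05650 — 7 statements merged into one kernel-verified Lean document; each statement's English description precedes it below -/
import Mathlib

section
/- Let d ≥ 1 and sample sizes n i ≥ 1 for i ∈ Fin d. If X i k < X r ℓ for two observations, then their pseudo-ranks satisfy Rψ i k < Rψ r ℓ. -/
open Finset

/-- The count function: c(u) = 0, 1/2, 1 according as u < 0, u = 0, u > 0. -/
noncomputable def cnt (u : ℝ) : ℝ := if u < 0 then 0 else if u = 0 then 1/2 else 1

/-- The (mid-)rank of the observation `X i k` among all observations. -/
noncomputable def rnk {d : ℕ} (n : Fin d → ℕ) (X : ∀ i : Fin d, Fin (n i) → ℝ)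
    (i : Fin d) (k : Fin (n i)) : ℝ :=
  1/2 + ∑ r : Fin d, ∑ l : Fin (n r), cnt (X i k - X r l)

/-- The pseudo-rank of the observation `X i k` among all observations. -/
noncomputable def psrnk {d : ℕ} (n : Fin d → ℕ) (X : ∀ i : Fin d, Fin (n i) → ℝ)
    (i : Fin d) (k : Fin (n i)) : ℝ :=
  1/2 + ((∑ r : Fin d, (n r : ℝ)) / (d : ℝ)) *
    ∑ r : Fin d, (1 / (n r : ℝ)) * ∑ l : Fin (n r), cnt (X i k - X r l)

lemma cnt_mono : Monotone cnt := by
  intro a b hab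
  unfold cnt
  split_ifs with h1 h2 h3 h4 h5 h6 h7 <;> norm_num <;>
    first
    | linarith
    | linarith [lt_of_le_of_ne (not_lt.mp h1) (Ne.symm h4)]

/-- If `X i k < X r l`, then the corresponding pseudo-ranks satisfy `Rψ i k < Rψ r l`. -/
theorem pseudorank_strict_mono {d : ℕ} (hd : 1 ≤ d) (n : Fin d → ℕ) (hn : ∀ i, 1 ≤ n i)
    (X : ∀ i : Fin d, Fin (n i) → ℝ) (i r : Fin d) (k : Fin (n i)) (l : Fin (n r))
    (h : X i k < X r l) : psrnk n X i k < psrnk n X r l := by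
  unfold psrnk
  have hpos : 0 < (∑ r : Fin d, (n r : ℝ)) / (d : ℝ) := by
    apply div_pos
    · apply Finset.sum_pos
      · intro s _
        exact_mod_cast Nat.lt_of_lt_of_le Nat.zero_lt_one (hn s)
      · exact ⟨⟨0, hd⟩, Finset.mem_univ _⟩
    · exact_mod_cast Nat.lt_of_lt_of_le Nat.zero_lt_one hd
  have key : ∑ s : Fin d, (1 / (n s : ℝ)) * ∑ m : Fin (n s), cnt (X i k - X s m) <
      ∑ s : Fin d, (1 / (n s : ℝ)) * ∑ m : Fin (n s), cnt (X r l - X s m) := by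
    apply Finset.sum_lt_sum
    · intro s _
      apply mul_le_mul_of_nonneg_left _ (by positivity)
      exact Finset.sum_le_sum fun m _ => cnt_mono (by linarith)
    · refine ⟨r, Finset.mem_univ r, ?_⟩
      have hns : (0:ℝ) < 1 / (n r : ℝ) := by
        have : (0:ℝ) < (n r : ℝ) := by exact_mod_cast Nat.lt_of_lt_of_le Nat.zero_lt_one (hn r)
        positivity
      apply mul_lt_mul_of_pos_left _ hns
      apply Finset.sum_lt_sum
      · intro m _
        exact cnt_mono (by linarith)
      · refine ⟨l, Finset.mem_univ l, ?_⟩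
        have h1 : cnt (X i k - X r l) = 0 := by
          unfold cnt; rw [if_pos (by linarith)]
        have h2 : cnt (X r l - X r l) = 1/2 := by
          unfold cnt; simp
        rw [h1, h2]; norm_num
  nlinarith [mul_lt_mul_of_pos_left key hpos]
end

section
/- Let d ≥ 1 and sample sizes n i ≥ 1 for i ∈ Fin d, with total N = Σ_i n i. Then every pseudo-rank satisfies the chain of inequalities (d+1)/(2d) ≤ 1/2 + N/(2 d (n i)) ≤ Rψ i k ≤ N + 1/2 − N/(2 d (n i)) ≤ N + (d−1)/(2d). -/
open Finset

lemma cnt_nonneg (u : ℝ) : 0 ≤ cnt u := by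
  unfold cnt; split_ifs <;> norm_num

lemma cnt_le_one (u : ℝ) : cnt u ≤ 1 := by
  unfold cnt; split_ifs <;> norm_num

lemma cnt_zero : cnt 0 = 1/2 := by
  unfold cnt; norm_num

/-- Chain of bounds for pseudo-ranks:
`(d+1)/(2d) ≤ 1/2 + N/(2 d nᵢ) ≤ Rψ i k ≤ N + 1/2 − N/(2 d nᵢ) ≤ N + (d−1)/(2d)`. -/
theorem pseudorank_bounds {d : ℕ} (hd : 1 ≤ d) (n : Fin d → ℕ) (hn : ∀ i, 1 ≤ n i)
    (N : ℕ) (hN : N = ∑ i : Fin d, n i) (X : ∀ i : Fin d, Fin (n i) → ℝ)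
    (i : Fin d) (k : Fin (n i)) :
    ((d : ℝ) + 1) / (2 * d) ≤ 1/2 + (N : ℝ) / (2 * d * (n i : ℝ)) ∧
    1/2 + (N : ℝ) / (2 * d * (n i : ℝ)) ≤ psrnk n X i k ∧
    psrnk n X i k ≤ (N : ℝ) + 1/2 - (N : ℝ) / (2 * d * (n i : ℝ)) ∧
    (N : ℝ) + 1/2 - (N : ℝ) / (2 * d * (n i : ℝ)) ≤ (N : ℝ) + ((d : ℝ) - 1) / (2 * d) := by
  have hd0 : (0:ℝ) < d := by exact_mod_cast hd
  have hni : (0:ℝ) < n i := by exact_mod_cast hn i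
  have hnr : ∀ r : Fin d, (0:ℝ) < n r := fun r => by exact_mod_cast hn r
  have hNi : (n i : ℝ) ≤ N := by
    rw [hN]; push_cast
    exact Finset.single_le_sum (fun r _ => (hnr r).le) (mem_univ i)
  have hN0 : (0:ℝ) ≤ N := le_trans hni.le hNi
  -- notation
  set S : Fin d → ℝ := fun r => ∑ l : Fin (n r), cnt (X i k - X r l) with hS
  have hSnn : ∀ r, 0 ≤ S r := fun r =>
    Finset.sum_nonneg (fun l _ => cnt_nonneg _)
  have hSle : ∀ r, S r ≤ n r := fun r => by
    calc S r ≤ ∑ _l : Fin (n r), (1:ℝ) :=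
          Finset.sum_le_sum (fun l _ => cnt_le_one _)
      _ = n r := by simp
  have hSi_lb : (1:ℝ)/2 ≤ S i := by
    have := Finset.single_le_sum (f := fun l : Fin (n i) => cnt (X i k - X i l))
      (fun l _ => cnt_nonneg _) (mem_univ k)
    simpa [sub_self, cnt_zero] using this
  have hSi_ub : S i ≤ (n i : ℝ) - 1/2 := by
    have : S i ≤ ∑ l : Fin (n i), (if l = k then (1:ℝ)/2 else 1) := by
      refine Finset.sum_le_sum (fun l _ => ?_)
      by_cases hl : l = k
      · simp [hl, sub_self, cnt_zero]
      · simp [hl, cnt_le_one]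
    calc S i ≤ ∑ l : Fin (n i), (if l = k then (1:ℝ)/2 else 1) := this
      _ = ∑ l : Fin (n i), ((1:ℝ) + (if l = k then -(1/2) else 0)) := by
          apply Finset.sum_congr rfl; intro l _; split_ifs <;> ring
      _ = (n i : ℝ) - 1/2 := by
          rw [Finset.sum_add_distrib, Finset.sum_ite_eq' univ k]
          simp; ring
  -- middle sum bounds
  have hsum_lb : (1/(n i : ℝ)) * (1/2) ≤ ∑ r : Fin d, (1/(n r : ℝ)) * S r := by
    have := Finset.single_le_sum (f := fun r : Fin d => (1/(n r : ℝ)) * S r)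
      (fun r _ => mul_nonneg (by positivity) (hSnn r)) (mem_univ i)
    refine le_trans ?_ this
    exact mul_le_mul_of_nonneg_left hSi_lb (by positivity)
  have hsum_ub : ∑ r : Fin d, (1/(n r : ℝ)) * S r ≤ (d : ℝ) - 1/(2 * (n i : ℝ)) := by
    have hle : ∀ r : Fin d, (1/(n r : ℝ)) * S r ≤
        (1:ℝ) + (if r = i then -(1/(2 * (n i : ℝ))) else 0) := by
      intro r
      by_cases hr : r = i
      · subst hr
        have h1 : (1/(n r : ℝ)) * S r ≤ (1/(n r : ℝ)) * ((n r : ℝ) - 1/2) :=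
          mul_le_mul_of_nonneg_left hSi_ub (by positivity)
        have h2 : (1/(n r : ℝ)) * ((n r : ℝ) - 1/2) = 1 - 1/(2 * (n r : ℝ)) := by
          field_simp
        rw [if_pos rfl]
        have := h1.trans_eq h2
        have h3 : (1:ℝ) - 1/(2 * (n r : ℝ)) = 1 + -(1/(2 * (n r : ℝ))) := by ring
        linarith [h3 ▸ this]
      · have h1 : (1/(n r : ℝ)) * S r ≤ (1/(n r : ℝ)) * (n r : ℝ) :=
          mul_le_mul_of_nonneg_left (hSle r) (by positivity)
        have h2 : (1/(n r : ℝ)) * (n r : ℝ) = 1 := by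
          rw [one_div, inv_mul_cancel₀ (hnr r).ne']
        simp only [if_neg hr]
        linarith [h1.trans_eq h2]
    calc ∑ r : Fin d, (1/(n r : ℝ)) * S r
        ≤ ∑ r : Fin d, ((1:ℝ) + (if r = i then -(1/(2 * (n i : ℝ))) else 0)) :=
          Finset.sum_le_sum (fun r _ => hle r)
      _ = (d : ℝ) - 1/(2 * (n i : ℝ)) := by
          rw [Finset.sum_add_distrib, Finset.sum_ite_eq' univ i]
          simp; ring
  have hNd : ((∑ r : Fin d, (n r : ℝ)) / (d : ℝ)) = (N : ℝ) / d := by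
    rw [hN]; push_cast; ring
  have hNd0 : (0:ℝ) ≤ (N : ℝ) / d := by positivity
  refine ⟨?_, ?_, ?_, ?_⟩
  · have h1 : (1:ℝ)/(2*d) ≤ (N:ℝ)/(2*d*(n i : ℝ)) := by
      rw [div_le_div_iff₀ (by positivity) (by positivity)]
      nlinarith [mul_nonneg hd0.le (sub_nonneg.2 hNi)]
    have h2 : ((d:ℝ)+1)/(2*d) = 1/2 + 1/(2*d) := by field_simp
    linarith
  · unfold psrnk
    rw [hNd]
    have := mul_le_mul_of_nonneg_left hsum_lb hNd0
    have heq : (N : ℝ) / d * ((1/(n i : ℝ)) * (1/2)) = (N : ℝ) / (2 * d * n i) := by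
      rw [eq_div_iff (by positivity)]
      field_simp
    rw [heq] at this
    linarith
  · unfold psrnk
    rw [hNd]
    have := mul_le_mul_of_nonneg_left hsum_ub hNd0
    have heq : (N : ℝ) / d * ((d : ℝ) - 1/(2 * (n i : ℝ))) = (N : ℝ) - (N : ℝ) / (2 * d * n i) := by
      field_simp
    rw [heq] at this
    linarith
  · have h1 : (1:ℝ)/(2*d) ≤ (N : ℝ) / (2 * d * n i) := by
      rw [div_le_div_iff₀ (by positivity) (by positivity)]
      nlinarith [mul_nonneg hd0.le (sub_nonneg.2 hNi)]
    have h2 : ((d:ℝ)-1)/(2*d) = 1/2 - 1/(2*d) := by field_simp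
    linarith
end

section
/- Let μ and ν be probability measures on ℝ that are both symmetric about the same point a, i.e. the pushforward of μ under the map x ↦ 2a − x equals μ, and likewise for ν. Then the relative effect equals 1/2: (μ ⊗ ν){(x,y) : x < y} + (1/2)·(μ ⊗ ν){(x,y) : x = y} = 1/2. -/
/-!
Reflecting both coordinates about `a` is order-reversing and, by symmetry of `μ` and `ν`,
preserves `μ ⊗ ν`; hence the events `X < Y` and `Y < X` are equally likely. Together with
`X = Y` they partition the plane, so `P(X < Y) + P(X = Y) / 2 = 1 / 2`.
-/

open MeasureTheory Set

section LinearOrder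

variable {α : Type*} [LinearOrder α] [TopologicalSpace α] [OrderClosedTopology α]
  [SecondCountableTopology α] [MeasurableSpace α] [OpensMeasurableSpace α]

theorem measurableSet_gt' : MeasurableSet {p : α × α | p.2 < p.1} :=
  (isOpen_lt continuous_snd continuous_fst).measurableSet

theorem measure_lt_add_measure_gt_add_measure_eq (ρ : Measure (α × α)) :
    ρ {p | p.1 < p.2} + ρ {p | p.2 < p.1} + ρ {p | p.1 = p.2} = ρ univ := by
  have hdisj_lt_gt : Disjoint {p : α × α | p.1 < p.2} {p | p.2 < p.1} :=
    disjoint_left.2 fun _ h h' => lt_asymm h h'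
  have hdisj_eq : Disjoint ({p : α × α | p.1 < p.2} ∪ {p | p.2 < p.1}) {p | p.1 = p.2} :=
    disjoint_left.2 fun p h (h' : p.1 = p.2) => by rcases h with h | h <;> simp_all
  have hcover : ({p : α × α | p.1 < p.2} ∪ {p | p.2 < p.1}) ∪ {p | p.1 = p.2} = univ := by
    ext p
    rcases lt_trichotomy p.1 p.2 with h | h | h <;> simp [h]
  rw [← measure_union hdisj_lt_gt measurableSet_gt', ← measure_union hdisj_eq
    (measurableSet_eq_fun measurable_fst measurable_snd), hcover]

theorem MeasureTheory.Measure.prod_lt_eq_prod_gt_of_strictAnti (μ ν : Measure α) [SFinite μ] [SFinite ν]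
    {f : α → α} (hf : StrictAnti f) (hfm : Measurable f) (hμ : μ.map f = μ) (hν : ν.map f = ν) :
    (μ.prod ν) {p | p.1 < p.2} = (μ.prod ν) {p | p.2 < p.1} := by
  have hpreimage : Prod.map f f ⁻¹' {p : α × α | p.1 < p.2} = {p | p.2 < p.1} := by
    ext p
    exact hf.lt_iff_gt
  calc (μ.prod ν) {p | p.1 < p.2}
      = ((μ.map f).prod (ν.map f)) {p | p.1 < p.2} := by rw [hμ, hν]
    _ = (μ.prod ν) (Prod.map f f ⁻¹' {p | p.1 < p.2}) := by
        rw [Measure.map_prod_map μ ν hfm hfm, Measure.map_apply (hfm.prodMap hfm) measurableSet_lt']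
    _ = (μ.prod ν) {p | p.2 < p.1} := by rw [hpreimage]

theorem measure_lt_add_half_measure_eq_of_measure_lt_eq_measure_gt (ρ : Measure (α × α))
    [IsProbabilityMeasure ρ] (h : ρ {p | p.1 < p.2} = ρ {p | p.2 < p.1}) :
    ρ {p | p.1 < p.2} + (1/2) * ρ {p | p.1 = p.2} = 1/2 := by
  have htotal := measure_lt_add_measure_gt_add_measure_eq ρ
  rw [← h, measure_univ] at htotal
  calc ρ {p | p.1 < p.2} + (1/2) * ρ {p | p.1 = p.2}
      = (1/2) * (ρ {p | p.1 < p.2} + ρ {p | p.1 < p.2} + ρ {p | p.1 = p.2}) := by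
        rw [mul_add, mul_add, ← add_mul, ENNReal.add_halves, one_mul]
    _ = 1/2 := by rw [htotal, mul_one]

end LinearOrder

/-- If `μ` and `ν` are both symmetric about the same point `a`, then the relative
effect of `ν` with respect to `μ` equals `1/2`. -/
theorem relative_effect_symmetric (μ ν : Measure ℝ)
    [IsProbabilityMeasure μ] [IsProbabilityMeasure ν] (a : ℝ)
    (hμ : Measure.map (fun x : ℝ => 2 * a - x) μ = μ)
    (hν : Measure.map (fun x : ℝ => 2 * a - x) ν = ν) :
    (μ.prod ν) {p : ℝ × ℝ | p.1 < p.2} + (1/2) * (μ.prod ν) {p : ℝ × ℝ | p.1 = p.2}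
      = 1/2 := by
  have hreflect : StrictAnti fun x : ℝ => 2 * a - x := fun _ _ h => by simpa using h
  exact measure_lt_add_half_measure_eq_of_measure_lt_eq_measure_gt _
    (Measure.prod_lt_eq_prod_gt_of_strictAnti μ ν hreflect (by fun_prop) hμ hν)
end

section
/- Let w : Fin 3 → Fin 3 → ℝ satisfy w i i = 1/2 for all i and w i r = 1 − w r i for all i, r. For weights λ : Fin 3 → ℝ define p i(λ) = Σ_{r ∈ Fin 3} λ r · w r i. Then the following are equivalent: (a) for every choice of weights λ with λ r > 0 for all r and λ 0 + λ 1 + λ 2 = 1, one has p 0(λ) = p 1(λ) = p 2(λ); (b) w 1 0 = w 2 0 = w 2 1 = 1/2. -/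
/-!
Each effect `∑ r, l r * w r i` is linear in the weights, and the open simplex of weights spans the
whole space, so equal effects on it force the columns of `w` to coincide. Every row of `w` is then
constant, hence equal to its diagonal entry `1/2`. Conversely, antisymmetry makes all entries
`1/2` once the three below the diagonal are.
-/

def openSimplex (ι : Type*) [Fintype ι] : Set (ι → ℝ) :=
  {l | (∀ r, 0 < l r) ∧ ∑ r, l r = 1}

section
variable {ι : Type*} [Fintype ι]

theorem eq_zero_of_sum_mul_eq_zero_on_openSimplex [DecidableEq ι] {f : ι → ℝ}
    (h : ∀ l ∈ openSimplex ι, ∑ r, l r * f r = 0) : f = 0 := by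
  funext s
  have hn : (0 : ℝ) < Fintype.card ι := by
    exact_mod_cast Fintype.card_pos_iff.mpr ⟨s⟩
  have hn1 : (Fintype.card ι : ℝ) + 1 ≠ 0 := by positivity
  have huniform : ∑ r, f r = 0 := by
    have := h (fun _ => 1 / Fintype.card ι) ⟨fun _ => by positivity, by simp [hn.ne']⟩
    rw [← Finset.mul_sum] at this
    simpa [hn.ne'] using this
  -- Doubling the weight of `s` isolates `f s`.
  have hbump := h (fun r => (1 + if r = s then 1 else 0) / (Fintype.card ι + 1))
    ⟨fun r => by dsimp only; split_ifs <;> positivity, by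
      rw [← Finset.sum_div, Finset.sum_add_distrib]; simp [hn1]⟩
  simp only [div_mul_eq_mul_div, ← Finset.sum_div, add_mul, Finset.sum_add_distrib] at hbump
  simpa [huniform, hn1] using hbump

theorem column_eq_of_sum_mul_eq_on_openSimplex (w : ι → ι → ℝ) {i j : ι}
    (h : ∀ l ∈ openSimplex ι, ∑ r, l r * w r i = ∑ r, l r * w r j) (r : ι) :
    w r i = w r j := by
  classical
  have := eq_zero_of_sum_mul_eq_zero_on_openSimplex (f := fun r => w r i - w r j)
    fun l hl => by simp only [mul_sub, Finset.sum_sub_distrib, h l hl, sub_self]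
  exact sub_eq_zero.mp (congrFun this r)
end

theorem eq_half_of_offDiag_eq_half (w : Fin 3 → Fin 3 → ℝ)
    (hdiag : ∀ i, w i i = 1/2) (hskew : ∀ i r, w i r = 1 - w r i)
    (h10 : w 1 0 = 1/2) (h20 : w 2 0 = 1/2) (h21 : w 2 1 = 1/2) (r i : Fin 3) :
    w r i = 1/2 := by
  fin_cases r <;> fin_cases i <;> simp <;>
    linarith [hdiag 0, hdiag 1, hdiag 2, hskew 0 1, hskew 0 2, hskew 1 2]

/-- The weighted relative effects are equal for *every* choice of positive weights
summing to one iff all pairwise effects equal `1/2`. -/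
theorem equal_effects_all_weights_iff (w : Fin 3 → Fin 3 → ℝ)
    (hdiag : ∀ i, w i i = 1/2) (hskew : ∀ i r, w i r = 1 - w r i) :
    (∀ l : Fin 3 → ℝ, (∀ r, 0 < l r) → l 0 + l 1 + l 2 = 1 →
      ((∑ r : Fin 3, l r * w r 0) = (∑ r : Fin 3, l r * w r 1) ∧
       (∑ r : Fin 3, l r * w r 1) = (∑ r : Fin 3, l r * w r 2))) ↔
    (w 1 0 = 1/2 ∧ w 2 0 = 1/2 ∧ w 2 1 = 1/2) := by
  constructor
  · intro h
    have heq : ∀ l ∈ openSimplex (Fin 3), _ := fun l ⟨hpos, hsum⟩ =>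
      h l hpos (by rwa [Fin.sum_univ_three] at hsum)
    have h01 := column_eq_of_sum_mul_eq_on_openSimplex w fun l hl => (heq l hl).1
    have h12 := column_eq_of_sum_mul_eq_on_openSimplex w fun l hl => (heq l hl).2
    have h02 := column_eq_of_sum_mul_eq_on_openSimplex w fun l hl =>
      (heq l hl).1.trans (heq l hl).2
    exact ⟨(h01 1).trans (hdiag 1), (h02 2).trans (hdiag 2), (h12 2).trans (hdiag 2)⟩
  · rintro ⟨h10, h20, h21⟩ l - -
    simp only [eq_half_of_offDiag_eq_half w hdiag hskew h10 h20 h21, and_self]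
end

section
/- Let μ₁, μ₂, μ₃ be the uniform probability measures on the finite sets S₁ = {9,16,17,20,21,22}, S₂ = {13,14,15,18,19,26}, and S₃ = {10,11,12,23,24,25} respectively (each point of a set carrying mass 1/6). Then (μ₂ ⊗ μ₁){(x,y) : x < y} = 7/12, (μ₁ ⊗ μ₃){(x,y) : x < y} = 7/12, and (μ₃ ⊗ μ₂){(x,y) : x < y} = 7/12. In other words, for independent X₁ ∼ μ₁, X₂ ∼ μ₂, X₃ ∼ μ₃: P(X₂ < X₁) = P(X₁ < X₃) = P(X₃ < X₂) = 7/12. -/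
open MeasureTheory

/-- The uniform probability measure on a finite set of reals. -/
noncomputable def unifOn (s : Finset ℝ) : Measure ℝ :=
  (s.card : ENNReal)⁻¹ • ∑ x ∈ s, Measure.dirac x

instance (s : Finset ℝ) : SFinite (unifOn s) := by unfold unifOn; infer_instance

lemma unifOn_prod_lt (s t : Finset ℝ) :
    (unifOn s).prod (unifOn t) {p : ℝ × ℝ | p.1 < p.2} =
      (s.card : ENNReal)⁻¹ * (t.card : ENNReal)⁻¹ *
        ∑ x ∈ s, ∑ y ∈ t, if x < y then 1 else 0 := by
  rw [Measure.prod_apply (measurableSet_lt measurable_fst measurable_snd)]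
  simp only [unifOn, lintegral_smul_measure, lintegral_finset_sum_measure]
  have : ∀ a : ℝ, Prod.mk a ⁻¹' {p : ℝ × ℝ | p.1 < p.2} = Set.Ioi a := by
    intro a; ext y; simp
  simp only [this, Measure.smul_apply, smul_eq_mul, Measure.finset_sum_apply,
    lintegral_dirac, Measure.dirac_apply, Set.indicator_apply, Set.mem_Ioi,
    Pi.one_apply]
  simp [Finset.mul_sum, mul_assoc]

lemma dice_arith : (6:ENNReal)⁻¹ * 6⁻¹ * 21 = 7/12 := by
  rw [← ENNReal.mul_inv (by norm_num) (by norm_num)]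
  norm_num
  rw [ENNReal.eq_div_iff (by norm_num) (by norm_num),
    show (12:ENNReal)*(36⁻¹*21) = 252 * 36⁻¹ by ring,
    ← div_eq_mul_inv, eq_comm, ENNReal.eq_div_iff (by norm_num) (by norm_num)]
  norm_num

set_option maxHeartbeats 1000000 in
/-- For the three tricky dice with faces `{9,16,17,20,21,22}`, `{13,14,15,18,19,26}`,
`{10,11,12,23,24,25}`, one has `P(X₂ < X₁) = P(X₁ < X₃) = P(X₃ < X₂) = 7/12`. -/
theorem tricky_dice_cyclic :
    ((unifOn {13,14,15,18,19,26}).prod (unifOn {9,16,17,20,21,22}))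
        {p : ℝ × ℝ | p.1 < p.2} = 7/12 ∧
    ((unifOn {9,16,17,20,21,22}).prod (unifOn {10,11,12,23,24,25}))
        {p : ℝ × ℝ | p.1 < p.2} = 7/12 ∧
    ((unifOn {10,11,12,23,24,25}).prod (unifOn {13,14,15,18,19,26}))
        {p : ℝ × ℝ | p.1 < p.2} = 7/12 := by
  refine ⟨?_, ?_, ?_⟩ <;>
  · rw [unifOn_prod_lt]
    norm_num [Finset.sum_insert, Finset.mem_insert, Finset.filter_insert,
      Finset.filter_singleton, Finset.card_insert_of_notMem]
    exact dice_arith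
end

section
/- Let w, v ∈ ℝ and let W : Fin 4 → Fin 4 → ℝ satisfy W i i = 1/2, W i r = 1 − W r i, W 0 1 = W 0 2 = W 1 3 = W 2 3 = w, W 1 2 = 1/2, and W 0 3 = v (i.e. w₁₂ = w₁₃ = w₂₄ = w₃₄ = w, w₂₃ = 1/2, w₁₄ = v in 1-based notation). Let n : Fin 4 → ℝ be positive sample sizes with N = Σ_i n i, and define p i = Σ_r (n r / N) · W r i. Then the nonparametric interaction contrast satisfies p 0 − p 1 − p 2 + p 3 = ((n 0 − n 3)/N) · (1/2 − 2w + v). In particular it is 0 when n 0 = n 3, and nonzero whenever n 0 ≠ n 3 and 1/2 − 2w + v ≠ 0. -/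
open Finset

/-- In the 2×2 design with the stated pattern of pairwise effects, the weighted
interaction contrast equals `((n 0 − n 3)/N)(1/2 − 2w + v)`; it vanishes for
`n 0 = n 3` and is nonzero whenever `n 0 ≠ n 3` and `1/2 − 2w + v ≠ 0`. -/
theorem weighted_interaction_contrast (w v : ℝ) (W : Fin 4 → Fin 4 → ℝ)
    (hdiag : ∀ i, W i i = 1/2) (hskew : ∀ i r, W i r = 1 - W r i)
    (h01 : W 0 1 = w) (h02 : W 0 2 = w) (h13 : W 1 3 = w) (h23 : W 2 3 = w)
    (h12 : W 1 2 = 1/2) (h03 : W 0 3 = v)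
    (n : Fin 4 → ℝ) (hn : ∀ i, 0 < n i) (N : ℝ) (hN : N = ∑ i : Fin 4, n i)
    (p : Fin 4 → ℝ) (hp : ∀ i, p i = ∑ r : Fin 4, (n r / N) * W r i) :
    p 0 - p 1 - p 2 + p 3 = ((n 0 - n 3) / N) * (1/2 - 2 * w + v) ∧
    (n 0 = n 3 → p 0 - p 1 - p 2 + p 3 = 0) ∧
    (n 0 ≠ n 3 → 1/2 - 2 * w + v ≠ 0 → p 0 - p 1 - p 2 + p 3 ≠ 0) := by
  have hNpos : 0 < N := by
    rw [hN, Fin.sum_univ_four]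
    have := hn 0; have := hn 1; have := hn 2; have := hn 3; linarith
  have hN0 : N ≠ 0 := ne_of_gt hNpos
  have h10 : W 1 0 = 1 - w := by rw [hskew 1 0, h01]
  have h20 : W 2 0 = 1 - w := by rw [hskew 2 0, h02]
  have h31 : W 3 1 = 1 - w := by rw [hskew 3 1, h13]
  have h32 : W 3 2 = 1 - w := by rw [hskew 3 2, h23]
  have h21 : W 2 1 = 1 - (1/2) := by rw [hskew 2 1, h12]
  have h30 : W 3 0 = 1 - v := by rw [hskew 3 0, h03]
  have key : p 0 - p 1 - p 2 + p 3 = ((n 0 - n 3) / N) * (1/2 - 2 * w + v) := by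
    rw [hp 0, hp 1, hp 2, hp 3]
    simp only [Fin.sum_univ_four, hdiag, h01, h02, h13, h23, h12, h03, h10, h20, h31, h32,
      h21, h30]
    field_simp
    ring
  refine ⟨key, ?_, ?_⟩
  · intro h; rw [key, h]; ring
  · intro h1 h2
    rw [key]
    exact mul_ne_zero (div_ne_zero (sub_ne_zero.mpr h1) hN0) h2
end

section
/- Let w, v ∈ ℝ and let W : Fin 4 → Fin 4 → ℝ satisfy W i i = 1/2, W i r = 1 − W r i, W 0 1 = W 0 2 = W 1 3 = W 2 3 = w, W 1 2 = 1/2, and W 0 3 = v. Define the unweighted relative effects ψ i = (1/4) Σ_{r ∈ Fin 4} W r i. Then ψ 0 = (1/4)(7/2 − 2w − v), ψ 1 = ψ 2 = 1/2, ψ 3 = (1/4)(1/2 + 2w + v), and the interaction contrast vanishes: ψ 0 − ψ 1 − ψ 2 + ψ 3 = 0. -/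
open Finset

/-- In the 2×2 design with the stated pattern of pairwise effects, the unweighted
relative effects have the stated values and their interaction contrast vanishes. -/
theorem unweighted_interaction_contrast_zero (w v : ℝ) (W : Fin 4 → Fin 4 → ℝ)
    (hdiag : ∀ i, W i i = 1/2) (hskew : ∀ i r, W i r = 1 - W r i)
    (h01 : W 0 1 = w) (h02 : W 0 2 = w) (h13 : W 1 3 = w) (h23 : W 2 3 = w)
    (h12 : W 1 2 = 1/2) (h03 : W 0 3 = v)
    (ψ : Fin 4 → ℝ) (hψ : ∀ i, ψ i = (1/4) * ∑ r : Fin 4, W r i) :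
    ψ 0 = (1/4) * (7/2 - 2 * w - v) ∧
    ψ 1 = 1/2 ∧ ψ 2 = 1/2 ∧
    ψ 3 = (1/4) * (1/2 + 2 * w + v) ∧
    ψ 0 - ψ 1 - ψ 2 + ψ 3 = 0 := by
  have h10 := hskew 1 0
  have h20 := hskew 2 0
  have h30 := hskew 3 0
  have h21 := hskew 2 1
  have h31 := hskew 3 1
  have h32 := hskew 3 2
  simp only [hψ, Fin.sum_univ_four, hdiag, h10, h20, h30, h21, h31, h32,
    h01, h02, h13, h23, h12, h03]
  ring_nf
  norm_num
end
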